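/- Let 0 < α < n, 0 < p ≤ 1, N = ⌊n(1/p−1)⌋ + 1, and let a be a (p,∞,N−1)-atom supported in the discrete cube Q_{k⁰,m}. Let Φ ∈ S(ℝⁿ) with supp(Φ) ⊂ B_{1/4}(0). Then for all j ∈ ℤⁿ with |j−k⁰|_∞ > 4⌊√n⌋m and all 1 ≤ t ≤ 2|j−k⁰|_∞, |(Φ_t^d ∗ I_α a)(j)| ≤ C (#Q_{k⁰,m})^{−1/p} (2m+1)^{n+N} |j−k⁰|_∞^{α−n−N}, with C independent of a, j, t, k⁰, m. -/

import Mathlib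

/-!
Fix `y` far from the cube `Q = Q_{k⁰,m}` and put `G z = ‖z - y‖ ^ (α - n)`. The moments of `a` up to
order `N - 1` vanish, so `I_α a (y) = ∑_{i ∈ Q} a i (G i - P i)`, where `P` is the Taylor polynomial
of `G` of degree `N - 1` at `k⁰`. If `|y - k⁰|_∞ > R / 2 > 2m`, the segment from `k⁰` to any `i ∈ Q`
stays at distance `> R / 4` from `y`; since `D^N G` is homogeneous of degree `α - n - N`, the
Taylor remainder is `O(R ^ (α - n - N) m ^ N)`, and summing over the `(2m+1)^n` points of `Q` bounds
`I_α a (y)`. The kernel `Φ_t^d` lives on `|i| < t / 4 ≤ |j - k⁰|_∞ / 2`, has at most `(3t/2)^n`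
nonzero values, each `O(t^{-n})`, and for each such `i` the point `y = j - i` satisfies the previous
estimate with `R = |j - k⁰|_∞`.
-/

open scoped BigOperators ENNReal

noncomputable section

/-- Euclidean norm of an integer vector in `ℤⁿ`. -/
def znorm {n : ℕ} (j : Fin n → ℤ) : ℝ := Real.sqrt (∑ l, ((j l : ℝ)) ^ 2)

/-- `ℓ^∞` norm of an integer vector, as a natural number. -/
def zinf {n : ℕ} (j : Fin n → ℤ) : ℕ := Finset.univ.sup fun l => (j l).natAbs

/-- The discrete cube centered at `k0` with "radius" `m` (side length `2m+1`),
i.e. `{i : |i - k0|_∞ ≤ m}`. -/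
def dcube {n : ℕ} (k0 : Fin n → ℤ) (m : ℕ) : Finset (Fin n → ℤ) :=
  Finset.Icc (fun l => k0 l - m) (fun l => k0 l + m)

/-- The discrete Riesz potential `(I_α b)(j) = ∑_{i ≠ j} b(i) |i-j|^{α-n}`. -/
def rieszPot {n : ℕ} (α : ℝ) (b : (Fin n → ℤ) → ℝ) (j : Fin n → ℤ) : ℝ :=
  ∑' i : {i : Fin n → ℤ // i ≠ j}, b i.1 * znorm (i.1 - j) ^ (α - n)

/-- Embedding of `ℤⁿ` into Euclidean space `ℝⁿ`. -/
def toE {n : ℕ} (j : Fin n → ℤ) : EuclideanSpace ℝ (Fin n) := WithLp.toLp 2 (fun l => (j l : ℝ))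

/-- The discretized dilation `Φ_t^d(j) = t^{-n} Φ(j/t)` for `j ≠ 0`, and `Φ_t^d(0) = 0`. -/
def phid {n : ℕ} (Φ : SchwartzMap (EuclideanSpace ℝ (Fin n)) ℝ) (t : ℝ) (j : Fin n → ℤ) : ℝ :=
  if j = 0 then 0 else t ^ (-(n : ℝ)) * Φ (t⁻¹ • toE j)

/-- Discrete convolution `(b ∗ c)(j) = ∑_i b(i) c(j-i)`. -/
def dconv {n : ℕ} (b c : (Fin n → ℤ) → ℝ) (j : Fin n → ℤ) : ℝ :=
  ∑' i : Fin n → ℤ, b i * c (j - i)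

/-- The maximal function `sup_{t>0} |(Φ_t^d ∗ b)(j)|`, valued in `ℝ≥0∞`. -/
def maxFn {n : ℕ} (Φ : SchwartzMap (EuclideanSpace ℝ (Fin n)) ℝ) (b : (Fin n → ℤ) → ℝ)
    (j : Fin n → ℤ) : ℝ≥0∞ :=
  ⨆ (t : ℝ) (_ : 0 < t), ENNReal.ofReal |dconv (phid Φ t) b j|

/-- The `ℓ^p` quasinorm (`0 < p < ∞`) of a real sequence on `ℤⁿ`, valued in `ℝ≥0∞`. -/
def elp {n : ℕ} (p : ℝ) (f : (Fin n → ℤ) → ℝ) : ℝ≥0∞ :=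
  (∑' j : Fin n → ℤ, ENNReal.ofReal |f j| ^ p) ^ (1 / p)

/-- The `ℓ^p` quasinorm of an `ℝ≥0∞`-valued sequence on `ℤⁿ`. -/
def elpE {n : ℕ} (p : ℝ) (f : (Fin n → ℤ) → ℝ≥0∞) : ℝ≥0∞ :=
  (∑' j : Fin n → ℤ, f j ^ p) ^ (1 / p)

/-- The discrete Hardy space quasinorm `‖b‖_{H^p} = ‖b‖_{ℓ^p} + ‖sup_{t>0}|Φ_t^d ∗ b|‖_{ℓ^p}`. -/
def hpNorm {n : ℕ} (Φ : SchwartzMap (EuclideanSpace ℝ (Fin n)) ℝ) (p : ℝ)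
    (b : (Fin n → ℤ) → ℝ) : ℝ≥0∞ :=
  elp p b + elpE p (maxFn Φ b)

/-- A `(p, ∞, N)`-atom supported in the discrete cube `dcube k0 m`. -/
def IsDiscreteAtom {n : ℕ} (p : ℝ) (N : ℕ) (k0 : Fin n → ℤ) (m : ℕ)
    (a : (Fin n → ℤ) → ℝ) : Prop :=
  (∀ j, j ∉ dcube k0 m → a j = 0) ∧
  (∀ j, |a j| ≤ ((dcube k0 m).card : ℝ) ^ (-(1 / p))) ∧
  (∀ β : Fin n → ℕ, (∑ l, β l) ≤ N →
    ∑ j ∈ dcube k0 m, (∏ l, ((j l : ℝ)) ^ β l) * a j = 0)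

/-- The centered discrete fractional maximal operator
`(M_α b)(j) = sup_m (#Q_{j,m})^{α/n - 1} ∑_{i ∈ Q_{j,m}} |b(i)|`. -/
def fracMax {n : ℕ} (α : ℝ) (b : (Fin n → ℤ) → ℝ) (j : Fin n → ℤ) : ℝ≥0∞ :=
  ⨆ m : ℕ, ENNReal.ofReal
    ((((dcube j m).card : ℝ) ^ (α / n - 1)) * ∑ i ∈ dcube j m, |b i|)

/-- The Taylor polynomial of degree `N - 1` of `f` centered at `c`, evaluated at `x`. -/
def taylorPoly {n : ℕ} (f : EuclideanSpace ℝ (Fin n) → ℝ) (c x : EuclideanSpace ℝ (Fin n))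
    (N : ℕ) : ℝ :=
  ∑ r ∈ Finset.range N, (1 / r.factorial : ℝ) * iteratedFDeriv ℝ r f c (fun _ => x - c)

section Lattice

variable {n : ℕ}

lemma natAbs_le_zinf (v : Fin n → ℤ) (l : Fin n) : (v l).natAbs ≤ zinf v :=
  Finset.le_sup (f := fun l => (v l).natAbs) (Finset.mem_univ l)

lemma zinf_le_iff {v : Fin n → ℤ} {m : ℕ} : zinf v ≤ m ↔ ∀ l, (v l).natAbs ≤ m := by
  simp [zinf]

lemma exists_natAbs_eq_zinf {v : Fin n → ℤ} (hv : zinf v ≠ 0) : ∃ l, zinf v = (v l).natAbs := by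
  have hne : (Finset.univ : Finset (Fin n)).Nonempty := by
    by_contra h
    simp [zinf, Finset.not_nonempty_iff_eq_empty.1 h] at hv
  obtain ⟨l, -, hl⟩ := Finset.exists_mem_eq_sup _ hne fun l => (v l).natAbs
  exact ⟨l, hl⟩

lemma zinf_add_le (u v : Fin n → ℤ) : zinf (u + v) ≤ zinf u + zinf v :=
  zinf_le_iff.2 fun l => (Int.natAbs_add_le _ _).trans <|
    add_le_add (natAbs_le_zinf u l) (natAbs_le_zinf v l)

lemma four_mul_lt_of_four_mul_sqrt_mul_lt {v : Fin n → ℤ} {m : ℕ}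
    (h : 4 * Nat.sqrt n * m < zinf v) : 4 * m < zinf v := by
  obtain ⟨l, -⟩ := exists_natAbs_eq_zinf (by omega : zinf v ≠ 0)
  have : 1 ≤ Nat.sqrt n := Nat.sqrt_pos.2 l.pos
  nlinarith

lemma mem_dcube_iff {k0 i : Fin n → ℤ} {m : ℕ} : i ∈ dcube k0 m ↔ zinf (i - k0) ≤ m := by
  simp only [dcube, Finset.mem_Icc, Pi.le_def, zinf_le_iff, Pi.sub_apply]
  constructor
  · rintro ⟨h1, h2⟩ l
    have := h1 l; have := h2 l; omega
  · intro h
    exact ⟨fun l => by have := h l; omega, fun l => by have := h l; omega⟩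

lemma card_dcube (k0 : Fin n → ℤ) (m : ℕ) : (dcube k0 m).card = (2 * m + 1) ^ n := by
  simp only [dcube, Pi.card_Icc, Int.card_Icc]
  rw [Finset.prod_congr rfl fun l _ => (by omega : (k0 l + m + 1 - (k0 l - m)).toNat = 2 * m + 1)]
  simp

lemma toE_sub (u v : Fin n → ℤ) : toE (u - v) = toE u - toE v := by
  ext l; simp [toE]

lemma znorm_eq_norm_toE (v : Fin n → ℤ) : znorm v = ‖toE v‖ := by
  simp [znorm, EuclideanSpace.norm_eq, toE]

lemma zinf_le_norm_toE (v : Fin n → ℤ) : (zinf v : ℝ) ≤ ‖toE v‖ := by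
  rcases eq_or_ne (zinf v) 0 with h | h
  · rw [h, Nat.cast_zero]; positivity
  obtain ⟨l, hl⟩ := exists_natAbs_eq_zinf h
  simpa [hl, toE] using PiLp.norm_apply_le (toE v) l

lemma norm_toE_le (v : Fin n → ℤ) : ‖toE v‖ ≤ Real.sqrt n * zinf v := by
  rw [EuclideanSpace.norm_eq, ← Real.sqrt_sq (by positivity : (0 : ℝ) ≤ zinf v),
    ← Real.sqrt_mul (Nat.cast_nonneg n)]
  refine Real.sqrt_le_sqrt ?_
  calc ∑ l, ‖toE v l‖ ^ 2 ≤ ∑ _l : Fin n, (zinf v : ℝ) ^ 2 := by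
        gcongr with l
        simpa [toE] using (Nat.cast_le (α := ℝ)).2 (natAbs_le_zinf v l)
    _ = n * (zinf v : ℝ) ^ 2 := by simp

end Lattice

section Calculus

lemma contDiffAt_norm_rpow {E : Type*} [NormedAddCommGroup E] [InnerProductSpace ℝ E]
    {x : E} (hx : x ≠ 0) (r : ℝ) (k : WithTop ℕ∞) : ContDiffAt ℝ k (fun z : E => ‖z‖ ^ r) x :=
  (Real.contDiffAt_rpow_const_of_ne (norm_ne_zero_iff.2 hx)).comp x (contDiffAt_norm ℝ hx)

lemma exists_norm_iteratedFDeriv_norm_rpow_le {E : Type*} [NormedAddCommGroup E]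
    [InnerProductSpace ℝ E] [FiniteDimensional ℝ E] (r : ℝ) (N : ℕ) :
    ∃ C > 0, ∀ x : E, x ≠ 0 →
      ‖iteratedFDeriv ℝ N (fun z : E => ‖z‖ ^ r) x‖ ≤ C * ‖x‖ ^ (r - N) := by
  set h : E → ℝ := fun z => ‖z‖ ^ r
  have hsmooth : ∀ x : E, x ≠ 0 → ContDiffAt ℝ N h x := fun x hx => contDiffAt_norm_rpow hx r N
  obtain ⟨C, hC⟩ := (isCompact_sphere (0 : E) 1).exists_bound_of_continuousOn
    (f := iteratedFDeriv ℝ N h) fun z hz =>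
      ((hsmooth z (ne_zero_of_mem_unit_sphere ⟨z, hz⟩)).continuousAt_iteratedFDeriv
        le_rfl).continuousWithinAt
  refine ⟨max C 1, by positivity, fun x hx => ?_⟩
  set c := ‖x‖
  have hc : 0 < c := norm_pos_iff.2 hx
  -- `h` is homogeneous of degree `r`, so rescaling by `e z = c⁻¹ • z` moves `x` to the unit sphere
  let e : E ≃L[ℝ] E := ContinuousLinearEquiv.smulLeft (Units.mk0 c⁻¹ (by positivity))
  have he : ∀ z, e z = c⁻¹ • z := fun z => rfl
  have hex : e x ∈ Metric.sphere (0 : E) 1 := by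
    simp [he, norm_smul, c, hc.ne']
  have hscale : h = fun z => c ^ r • (h ∘ e) z := by
    ext z
    simp only [h, Function.comp_apply, he, norm_smul, norm_inv, Real.norm_of_nonneg hc.le,
      smul_eq_mul]
    rw [Real.mul_rpow (by positivity) (norm_nonneg z), Real.inv_rpow hc.le,
      mul_inv_cancel_left₀ (Real.rpow_pos_of_pos hc r).ne']
  have hcomp : iteratedFDeriv ℝ N (h ∘ e) x
      = (iteratedFDeriv ℝ N h (e x)).compContinuousLinearMap fun _ => (e : E →L[ℝ] E) := by
    simpa [iteratedFDerivWithin_univ] using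
      e.iteratedFDerivWithin_comp_right h uniqueDiffOn_univ (Set.mem_univ (e x)) N
  have he_norm : ‖(e : E →L[ℝ] E)‖ ≤ c⁻¹ :=
    ContinuousLinearMap.opNorm_le_bound _ (by positivity) fun z => by
      simp [he, norm_smul, abs_of_pos hc]
  rw [hscale, iteratedFDeriv_const_smul_apply'
      ((hsmooth (e x) (ne_zero_of_mem_unit_sphere ⟨_, hex⟩)).comp x e.contDiff.contDiffAt),
    hcomp, norm_smul, Real.norm_of_nonneg (by positivity)]
  calc c ^ r * ‖(iteratedFDeriv ℝ N h (e x)).compContinuousLinearMap fun _ => (e : E →L[ℝ] E)‖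
      ≤ c ^ r * (max C 1 * ∏ _q : Fin N, c⁻¹) := by
        gcongr
        refine (ContinuousMultilinearMap.norm_compContinuousLinearMap_le _ _).trans ?_
        gcongr
        exact (hC _ hex).trans (le_max_left _ _)
    _ = max C 1 * c ^ (r - N) := by
        rw [Finset.prod_const, Finset.card_univ, Fintype.card_fin, Real.rpow_sub hc,
          Real.rpow_natCast, inv_pow]
        ring

lemma abs_sub_taylorPoly_le {n N : ℕ} {f : EuclideanSpace ℝ (Fin n) → ℝ}
    {c x : EuclideanSpace ℝ (Fin n)} {K : ℝ}
    (hf : ∀ s ∈ Set.Icc (0 : ℝ) 1, ContDiffAt ℝ N f (c + s • (x - c)))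
    (hK : ∀ s ∈ Set.Icc (0 : ℝ) 1, ‖iteratedFDeriv ℝ N f (c + s • (x - c))‖ ≤ K) :
    |f x - taylorPoly f c x N| ≤ K * ‖x - c‖ ^ N := by
  cases N with
  | zero =>
    simpa [taylorPoly, norm_iteratedFDeriv_zero] using hK 1 ⟨zero_le_one, le_rfl⟩
  | succ k =>
    have htaylor := map_add_eq_sum_add_integral_iteratedFDeriv (x := c) (y := x - c) (n := k)
      (by exact_mod_cast hf)
    rw [add_sub_cancel] at htaylor
    have hpoly : taylorPoly f c x (k + 1)
        = ∑ r ∈ Finset.range (k + 1),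
            (r.factorial : ℝ)⁻¹ • iteratedFDeriv ℝ r f c fun _ => x - c := by
      simp [taylorPoly]
    rw [hpoly, htaylor, add_sub_cancel_left, smul_eq_mul, abs_mul,
      abs_of_pos (by positivity : (0 : ℝ) < (k.factorial : ℝ)⁻¹)]
    have hintegral := intervalIntegral.norm_integral_le_of_norm_le_const
        (C := K * ‖x - c‖ ^ (k + 1)) (a := 0) (b := 1)
        (f := fun t => (1 - t) ^ k • iteratedFDeriv ℝ (k + 1) f (c + t • (x - c)) fun _ => x - c)
        fun t ht => by
      rw [Set.uIoc_of_le zero_le_one] at ht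
      have h1t : ‖(1 - t) ^ k‖ ≤ 1 := by
        rw [norm_pow, Real.norm_of_nonneg (by linarith [ht.2])]
        exact pow_le_one₀ (by linarith [ht.2]) (by linarith [ht.1])
      calc ‖(1 - t) ^ k • iteratedFDeriv ℝ (k + 1) f (c + t • (x - c)) fun _ => x - c‖
          ≤ 1 * (K * ∏ _q : Fin (k + 1), ‖x - c‖) := by
            rw [norm_smul]
            gcongr
            exact ContinuousMultilinearMap.le_mul_prod_of_opNorm_le_of_le
              (hK t (Set.Ioc_subset_Icc_self ht)) fun _ => le_rfl
        _ = K * ‖x - c‖ ^ (k + 1) := by simp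
    rw [sub_zero, abs_one, mul_one, Real.norm_eq_abs] at hintegral
    calc (k.factorial : ℝ)⁻¹ * |∫ t in (0 : ℝ)..1,
          (1 - t) ^ k • iteratedFDeriv ℝ (k + 1) f (c + t • (x - c)) fun _ => x - c|
        ≤ 1 * (K * ‖x - c‖ ^ (k + 1)) := by
          gcongr
          exact inv_le_one_of_one_le₀ (by exact_mod_cast k.factorial_pos)
      _ = K * ‖x - c‖ ^ (k + 1) := one_mul _

end Calculus

namespace IsDiscreteAtom

variable {n : ℕ} {p : ℝ} {N : ℕ} {k0 : Fin n → ℤ} {m : ℕ} {a : (Fin n → ℤ) → ℝ}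

lemma sum_mul_prod_eq_zero (ha : IsDiscreteAtom p N k0 m a) {r : ℕ} (d : Fin r → Fin n)
    (S : Finset (Fin r)) (hS : S.card ≤ N) :
    ∑ i ∈ dcube k0 m, a i * ∏ q ∈ S, (i (d q) : ℝ) = 0 := by
  classical
  have hmonomial : ∀ i : Fin n → ℤ,
      ∏ q ∈ S, (i (d q) : ℝ) = ∏ l, (i l : ℝ) ^ (S.filter fun q => d q = l).card := by
    intro i
    simp_rw [← Finset.prod_const,
      Finset.prod_fiberwise_of_maps_to' fun q _ => Finset.mem_univ (d q)]
  have hdeg : ∑ l, (S.filter fun q => d q = l).card = S.card :=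
    (Finset.card_eq_sum_card_fiberwise fun q _ => Finset.mem_univ (d q)).symm
  simp_rw [hmonomial, mul_comm (a _)]
  exact ha.2.2 _ (hdeg ▸ hS)

lemma sum_mul_prod_sub_eq_zero (ha : IsDiscreteAtom p N k0 m a) {r : ℕ} (hr : r ≤ N)
    (d : Fin r → Fin n) :
    ∑ i ∈ dcube k0 m, a i * ∏ q, ((i (d q) : ℝ) - k0 (d q)) = 0 := by
  simp_rw [sub_eq_add_neg, Finset.prod_add, Finset.mul_sum]
  rw [Finset.sum_comm]
  refine Finset.sum_eq_zero fun T _ => ?_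
  simp_rw [← mul_assoc, ← Finset.sum_mul]
  rw [ha.sum_mul_prod_eq_zero d T ((Finset.card_le_univ T).trans (by simpa using hr)), zero_mul]

lemma sum_mul_multilinear_eq_zero (ha : IsDiscreteAtom p N k0 m a) {r : ℕ} (hr : r ≤ N)
    (A : MultilinearMap ℝ (fun _ : Fin r => EuclideanSpace ℝ (Fin n)) ℝ) :
    ∑ i ∈ dcube k0 m, a i * A (fun _ => toE i - toE k0) = 0 := by
  classical
  have hexpand : ∀ i : Fin n → ℤ, A (fun _ => toE i - toE k0)
      = ∑ d : Fin r → Fin n, (∏ q, ((i (d q) : ℝ) - k0 (d q)))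
          * A fun q => EuclideanSpace.basisFun (Fin n) ℝ (d q) := by
    intro i
    conv_lhs => rw [← funext fun _ => (EuclideanSpace.basisFun (Fin n) ℝ).sum_repr (toE i - toE k0)]
    simp [A.map_sum, A.map_smul_univ, toE]
  simp_rw [hexpand, Finset.mul_sum]
  rw [Finset.sum_comm]
  refine Finset.sum_eq_zero fun d _ => ?_
  simp_rw [← mul_assoc, ← Finset.sum_mul]
  rw [ha.sum_mul_prod_sub_eq_zero hr d, zero_mul]

lemma sum_mul_taylorPoly_eq_zero (ha : IsDiscreteAtom p (N - 1) k0 m a)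
    (f : EuclideanSpace ℝ (Fin n) → ℝ) :
    ∑ i ∈ dcube k0 m, a i * taylorPoly f (toE k0) (toE i) N = 0 := by
  simp_rw [taylorPoly, Finset.mul_sum]
  rw [Finset.sum_comm]
  refine Finset.sum_eq_zero fun r hr => ?_
  simp_rw [mul_left_comm (a _), ← Finset.mul_sum]
  exact mul_eq_zero_of_right _ <| ha.sum_mul_multilinear_eq_zero
    (by have := Finset.mem_range.1 hr; omega) (iteratedFDeriv ℝ r f (toE k0)).toMultilinearMap

end IsDiscreteAtom

section Riesz

variable {n : ℕ}

lemma abs_sub_le_of_mem_dcube {k0 i : Fin n → ℤ} {m : ℕ} (hi : i ∈ dcube k0 m) (l : Fin n) :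
    |(i l : ℝ) - k0 l| ≤ m := by
  have := natAbs_le_zinf _ l |>.trans (mem_dcube_iff.1 hi)
  rw [← Int.cast_sub, ← Int.cast_abs, Int.abs_eq_natAbs]
  exact_mod_cast this

lemma norm_toE_sub_le_of_mem_dcube {k0 i : Fin n → ℤ} {m : ℕ} (hi : i ∈ dcube k0 m) :
    ‖toE i - toE k0‖ ≤ Real.sqrt n * m := by
  rw [← toE_sub]
  exact (norm_toE_le _).trans (by gcongr; exact_mod_cast mem_dcube_iff.1 hi)

lemma zinf_sub_le_norm_sub {k0 y : Fin n → ℤ} {m : ℕ} {z : EuclideanSpace ℝ (Fin n)}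
    (hz : ∀ l, |z l - k0 l| ≤ m) : (zinf (y - k0) : ℝ) - m ≤ ‖z - toE y‖ := by
  rcases eq_or_ne (zinf (y - k0)) 0 with h | h
  · rw [h, Nat.cast_zero]
    linarith [norm_nonneg (z - toE y), Nat.cast_nonneg (α := ℝ) m]
  obtain ⟨l, hl⟩ := exists_natAbs_eq_zinf h
  have hyl : (zinf (y - k0) : ℝ) = |(y l : ℝ) - k0 l| := by
    rw [hl, Nat.cast_natAbs, Int.cast_abs, Pi.sub_apply, Int.cast_sub]
  have hzl : |z l - y l| ≤ ‖z - toE y‖ := by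
    simpa [toE] using PiLp.norm_apply_le (z - toE y) l
  rw [hyl]
  linarith [abs_sub_le (y l : ℝ) (z l) (k0 l), abs_sub_comm (y l : ℝ) (z l), hz l]

lemma rieszPot_eq_sum {α : ℝ} {a : (Fin n → ℤ) → ℝ} {k0 y : Fin n → ℤ} {m : ℕ}
    (ha : ∀ i, i ∉ dcube k0 m → a i = 0) (hy : y ∉ dcube k0 m) :
    rieszPot α a y = ∑ i ∈ dcube k0 m, a i * ‖toE i - toE y‖ ^ (α - n) := by
  refine (tsum_subtype_eq_of_support_subset (s := {i | i ≠ y})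
      (f := fun i => a i * znorm (i - y) ^ (α - n)) fun i hi hiy => ?_).trans ?_
  · simp [hiy, ha y hy] at hi
  · rw [tsum_eq_sum (s := dcube k0 m) fun i hi => by simp [ha i hi]]
    simp [znorm_eq_norm_toE, toE_sub]

lemma lt_norm_segment_sub {k0 i y : Fin n → ℤ} {m : ℕ} {R s : ℝ} (hi : i ∈ dcube k0 m)
    (hm : 4 * m < R) (hy : R / 2 < zinf (y - k0)) (hs : s ∈ Set.Icc (0 : ℝ) 1) :
    R / 4 < ‖toE k0 + s • (toE i - toE k0) - toE y‖ := by
  have := zinf_sub_le_norm_sub (y := y) (z := toE k0 + s • (toE i - toE k0)) fun l => by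
    have hcoord : (toE k0 + s • (toE i - toE k0)) l - k0 l = s * ((i l : ℝ) - k0 l) := by
      simp [toE]
    rw [hcoord, abs_mul, abs_of_nonneg hs.1]
    exact (mul_le_of_le_one_left (abs_nonneg _) hs.2).trans (abs_sub_le_of_mem_dcube hi l)
  linarith

lemma abs_norm_rpow_sub_taylorPoly_le {r : ℝ} {N : ℕ} (hrN : r - N ≤ 0) {C : ℝ} (hC : 0 ≤ C)
    (hD : ∀ x : EuclideanSpace ℝ (Fin n), x ≠ 0 →
      ‖iteratedFDeriv ℝ N (fun z => ‖z‖ ^ r) x‖ ≤ C * ‖x‖ ^ (r - N))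
    {k0 i y : Fin n → ℤ} {m : ℕ} {R : ℝ} (hi : i ∈ dcube k0 m) (hm : 4 * m < R)
    (hy : R / 2 < zinf (y - k0)) :
    |‖toE i - toE y‖ ^ r - taylorPoly (fun z => ‖z - toE y‖ ^ r) (toE k0) (toE i) N|
      ≤ C * (R / 4) ^ (r - N) * (Real.sqrt n * m) ^ N := by
  have hR : 0 < R / 4 := by linarith [(Nat.cast_nonneg m : (0 : ℝ) ≤ m)]
  have hne : ∀ s ∈ Set.Icc (0 : ℝ) 1, toE k0 + s • (toE i - toE k0) - toE y ≠ 0 :=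
    fun s hs => norm_pos_iff.1 <| hR.trans (lt_norm_segment_sub hi hm hy hs)
  refine (abs_sub_taylorPoly_le (f := fun z => ‖z - toE y‖ ^ r) (K := C * (R / 4) ^ (r - N))
    (fun s hs => (contDiffAt_norm_rpow (hne s hs) _ _).comp (f := fun z => z - toE y) _
      (contDiffAt_id.sub contDiffAt_const))
    (fun s hs => ?_)).trans ?_
  · refine (congrArg norm (iteratedFDeriv_comp_sub
      (f := fun w : EuclideanSpace ℝ (Fin n) => ‖w‖ ^ r) N (toE y) _)).trans_le
      ((hD _ (hne s hs)).trans ?_)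
    exact mul_le_mul_of_nonneg_left
      (Real.rpow_le_rpow_of_nonpos hR (lt_norm_segment_sub hi hm hy hs).le hrN) hC
  · gcongr
    exact norm_toE_sub_le_of_mem_dcube hi

theorem exists_abs_rieszPot_le {α : ℝ} (hαn : α < n) (p : ℝ) (N : ℕ) :
    ∃ C > 0, ∀ (k0 : Fin n → ℤ) (m : ℕ) (a : (Fin n → ℤ) → ℝ), IsDiscreteAtom p (N - 1) k0 m a →
      ∀ (R : ℝ) (y : Fin n → ℤ), 4 * m < R → R / 2 < zinf (y - k0) →
        |rieszPot α a y| ≤ C * ((dcube k0 m).card : ℝ) ^ (-(1 / p)) * (2 * m + 1 : ℝ) ^ (n + N) *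
          R ^ (α - n - N) := by
  obtain ⟨C₁, hC₁, hD⟩ :=
    exists_norm_iteratedFDeriv_norm_rpow_le (E := EuclideanSpace ℝ (Fin n)) (α - n) N
  have he : α - n - N ≤ 0 := by linarith [Nat.cast_nonneg (α := ℝ) N]
  refine ⟨C₁ * (Real.sqrt n + 1) ^ N / 4 ^ (α - n - N), by positivity, ?_⟩
  intro k0 m a ha R y hm hy
  have hR : 0 < R := lt_of_le_of_lt (by positivity) hm
  set G : EuclideanSpace ℝ (Fin n) → ℝ := fun z => ‖z - toE y‖ ^ (α - n)
  have hy' : y ∉ dcube k0 m := fun hmem => by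
    have : (zinf (y - k0) : ℝ) ≤ m := by exact_mod_cast mem_dcube_iff.1 hmem
    linarith
  have hsum : rieszPot α a y
      = ∑ i ∈ dcube k0 m, a i * (G (toE i) - taylorPoly G (toE k0) (toE i) N) := by
    simp_rw [mul_sub, Finset.sum_sub_distrib, ha.sum_mul_taylorPoly_eq_zero G, sub_zero]
    exact rieszPot_eq_sum ha.1 hy'
  have hsqrt : Real.sqrt n * m ≤ (Real.sqrt n + 1) * (2 * m + 1) := by
    nlinarith [Real.sqrt_nonneg n, Nat.cast_nonneg (α := ℝ) m]
  calc |rieszPot α a y|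
      ≤ ∑ i ∈ dcube k0 m, |a i| * |G (toE i) - taylorPoly G (toE k0) (toE i) N| := by
        rw [hsum]
        exact (Finset.abs_sum_le_sum_abs _ _).trans_eq (by simp_rw [abs_mul])
    _ ≤ ∑ _i ∈ dcube k0 m, ((dcube k0 m).card : ℝ) ^ (-(1 / p)) *
          (C₁ * (R / 4) ^ (α - n - N) * ((Real.sqrt n + 1) * (2 * m + 1)) ^ N) := by
        gcongr with i hi
        · exact ha.2.1 i
        · exact (abs_norm_rpow_sub_taylorPoly_le he hC₁.le hD hi hm hy).trans (by gcongr)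
    _ = C₁ * (Real.sqrt n + 1) ^ N / 4 ^ (α - n - N) * ((dcube k0 m).card : ℝ) ^ (-(1 / p)) *
          (2 * m + 1 : ℝ) ^ (n + N) * R ^ (α - n - N) := by
        rw [Finset.sum_const, nsmul_eq_mul, mul_pow, Real.div_rpow hR.le (by norm_num)]
        rw [card_dcube]
        push_cast
        ring

end Riesz

section Convolution

variable {n : ℕ} {Φ : SchwartzMap (EuclideanSpace ℝ (Fin n)) ℝ} {t : ℝ}

lemma phid_eq_zero_of_le_norm (hΦ : Function.support (⇑Φ) ⊆ Metric.ball 0 (1 / 4)) (ht : 0 < t)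
    {i : Fin n → ℤ} (hi : t / 4 ≤ ‖toE i‖) : phid Φ t i = 0 := by
  suffices Φ (t⁻¹ • toE i) = 0 by simp [phid, this]
  by_contra hne
  have hball := hΦ (Function.mem_support.2 hne)
  rw [mem_ball_zero_iff, norm_smul, norm_inv, Real.norm_of_nonneg ht.le,
    inv_mul_lt_iff₀ ht] at hball
  linarith

lemma abs_phid_le {C : ℝ} (hC : ∀ x, |Φ x| ≤ C) (ht : 0 < t) (i : Fin n → ℤ) :
    |phid Φ t i| ≤ t ^ (-(n : ℝ)) * C := by
  have htn : 0 < t ^ (-(n : ℝ)) := Real.rpow_pos_of_pos ht _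
  unfold phid
  split_ifs
  · simpa using mul_nonneg htn.le ((abs_nonneg _).trans (hC 0))
  · rw [abs_mul, abs_of_pos htn]
    exact mul_le_mul_of_nonneg_left (hC _) htn.le

lemma dconv_phid_eq_sum (hΦ : Function.support (⇑Φ) ⊆ Metric.ball 0 (1 / 4)) (ht : 0 < t)
    (b : (Fin n → ℤ) → ℝ) (j : Fin n → ℤ) :
    dconv (phid Φ t) b j = ∑ i ∈ dcube 0 ⌊t / 4⌋₊, phid Φ t i * b (j - i) := by
  refine tsum_eq_sum fun i hi => ?_
  rw [mem_dcube_iff, sub_zero, not_le] at hi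
  have : t / 4 ≤ zinf i := (Nat.lt_floor_add_one _).le.trans (by exact_mod_cast hi)
  rw [phid_eq_zero_of_le_norm hΦ ht (this.trans (zinf_le_norm_toE i)), zero_mul]

lemma abs_dconv_phid_le (hΦ : Function.support (⇑Φ) ⊆ Metric.ball 0 (1 / 4)) {C : ℝ}
    (hC : ∀ x, |Φ x| ≤ C) (ht : 1 ≤ t) {b : (Fin n → ℤ) → ℝ} {j : Fin n → ℤ} {B : ℝ}
    (hb : ∀ i, ‖toE i‖ < t / 4 → |b (j - i)| ≤ B) :
    |dconv (phid Φ t) b j| ≤ (3 / 2) ^ n * C * B := by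
  have ht0 : 0 < t := zero_lt_one.trans_le ht
  have hB : 0 ≤ B := (abs_nonneg _).trans (hb 0 (by
    rw [show toE (0 : Fin n → ℤ) = 0 by ext; simp [toE], norm_zero]; positivity))
  have hterm : ∀ i, |phid Φ t i * b (j - i)| ≤ t ^ (-(n : ℝ)) * C * B := by
    intro i
    rw [abs_mul]
    by_cases hi : ‖toE i‖ < t / 4
    · exact mul_le_mul (abs_phid_le hC ht0 i) (hb i hi) (abs_nonneg _)
        ((abs_nonneg _).trans (abs_phid_le hC ht0 i))
    · rw [phid_eq_zero_of_le_norm hΦ ht0 (not_lt.1 hi), abs_zero, zero_mul]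
      exact mul_nonneg ((abs_nonneg _).trans (abs_phid_le hC ht0 0)) hB
  have hcard : ((dcube (0 : Fin n → ℤ) ⌊t / 4⌋₊).card : ℝ) ≤ (3 / 2 * t) ^ n := by
    rw [card_dcube]
    push_cast
    gcongr
    linarith [Nat.floor_le (by positivity : 0 ≤ t / 4)]
  calc |dconv (phid Φ t) b j|
      ≤ ∑ i ∈ dcube 0 ⌊t / 4⌋₊, |phid Φ t i * b (j - i)| := by
        rw [dconv_phid_eq_sum hΦ ht0]
        exact Finset.abs_sum_le_sum_abs _ _
    _ ≤ (3 / 2 * t) ^ n * (t ^ (-(n : ℝ)) * C * B) := by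
        refine (Finset.sum_le_sum fun i _ => hterm i).trans ?_
        rw [Finset.sum_const, nsmul_eq_mul]
        exact mul_le_mul_of_nonneg_right hcard ((abs_nonneg _).trans (hterm 0))
    _ = (3 / 2) ^ n * C * B := by
        rw [Real.rpow_neg ht0.le, Real.rpow_natCast, mul_pow]
        field_simp

end Convolution

theorem stmt14_general (n : ℕ) (α p : ℝ) (hαn : α < n)
    (N : ℕ)
    (Φ : SchwartzMap (EuclideanSpace ℝ (Fin n)) ℝ)
    (hΦ : Function.support (⇑Φ) ⊆ Metric.ball 0 (1 / 4)) :
    ∃ C > (0 : ℝ), ∀ (k0 : Fin n → ℤ) (m : ℕ) (a : (Fin n → ℤ) → ℝ),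
      IsDiscreteAtom p (N - 1) k0 m a →
      ∀ (j : Fin n → ℤ) (t : ℝ),
        4 * Nat.sqrt n * m < zinf (j - k0) → 1 ≤ t → t ≤ 2 * (zinf (j - k0) : ℝ) →
        |dconv (phid Φ t) (rieszPot α a) j|
          ≤ C * ((dcube k0 m).card : ℝ) ^ (-(1 / p)) * (2 * m + 1 : ℝ) ^ (n + N) *
              ((zinf (j - k0) : ℝ)) ^ (α - n - N) := by
  obtain ⟨CΦ, hCΦ, hΦC⟩ : ∃ C > 0, ∀ x, |Φ x| ≤ C := by
    obtain ⟨C, hC, hdecay⟩ := Φ.decay 0 0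
    exact ⟨C, hC, fun x => by simpa using hdecay x⟩
  obtain ⟨CR, hCR, hriesz⟩ := exists_abs_rieszPot_le hαn p N
  refine ⟨(3 / 2) ^ n * CΦ * CR, by positivity, fun k0 m a ha j t hjm ht1 ht2 => ?_⟩
  have hm : (4 * m : ℝ) < zinf (j - k0) := by
    exact_mod_cast four_mul_lt_of_four_mul_sqrt_mul_lt hjm
  have hfar : ∀ i, ‖toE i‖ < t / 4 → (zinf (j - k0) : ℝ) / 2 < zinf (j - i - k0) := by
    intro i hi
    have htri : zinf (j - k0) ≤ zinf (j - i - k0) + zinf i := by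
      simpa [sub_right_comm j i k0] using zinf_add_le (j - i - k0) i
    have : (zinf (j - k0) : ℝ) ≤ zinf (j - i - k0) + zinf i := by exact_mod_cast htri
    linarith [zinf_le_norm_toE i]
  calc |dconv (phid Φ t) (rieszPot α a) j|
      ≤ (3 / 2) ^ n * CΦ * (CR * ((dcube k0 m).card : ℝ) ^ (-(1 / p)) *
          (2 * m + 1 : ℝ) ^ (n + N) * (zinf (j - k0) : ℝ) ^ (α - n - N)) :=
        abs_dconv_phid_le hΦ hΦC ht1 fun i hi => hriesz k0 m a ha _ (j - i) hm (hfar i hi)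
    _ = _ := by ring

/-- Case I: for a `(p,∞,N-1)`-atom `a` supported in `Q_{k⁰,m}`, all `j` with
`|j-k⁰|_∞ > 4⌊√n⌋m` and all `1 ≤ t ≤ 2|j-k⁰|_∞`,
`|(Φ_t^d ∗ I_α a)(j)| ≤ C (#Q)^{-1/p} (2m+1)^{n+N} |j-k⁰|_∞^{α-n-N}`. -/
theorem stmt14 (n : ℕ) (α p : ℝ) (hα : 0 < α) (hαn : α < n) (hp : 0 < p) (hp1 : p ≤ 1)
    (N : ℕ) (hN : N = ⌊(n : ℝ) * (1 / p - 1)⌋₊ + 1)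
    (Φ : SchwartzMap (EuclideanSpace ℝ (Fin n)) ℝ)
    (hΦ : Function.support (⇑Φ) ⊆ Metric.ball 0 (1 / 4)) :
    ∃ C > (0 : ℝ), ∀ (k0 : Fin n → ℤ) (m : ℕ) (a : (Fin n → ℤ) → ℝ),
      IsDiscreteAtom p (N - 1) k0 m a →
      ∀ (j : Fin n → ℤ) (t : ℝ),
        4 * Nat.sqrt n * m < zinf (j - k0) → 1 ≤ t → t ≤ 2 * (zinf (j - k0) : ℝ) →
        |dconv (phid Φ t) (rieszPot α a) j|
          ≤ C * ((dcube k0 m).card : ℝ) ^ (-(1 / p)) * (2 * m + 1 : ℝ) ^ (n + N) *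
              ((zinf (j - k0) : ℝ)) ^ (α - n - N) :=
  stmt14_general n α p hαn N Φ hΦ
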